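/- arXiv:2011.01586 — 2 statements merged into one kernel-verified Lean document; each statement's English description precedes it below -/
import Mathlib

section
/- Let m be a locally doubling flow measure on a tree rooted at infinity. Then m has at least exponential growth — i.e. for every x_0 ∈ V there exist r_0 ∈ ℕ, β_0 > 0 and α > 0 with m(B_r(x_0)) ≥ β_0·e^{αr} for all r > r_0 — if and only if for every x_0 ∈ V there exist r_0 ∈ ℕ and α > 0 such that |{1 ≤ j ≤ r : q(x_j) ≥ 2}| ≥ α·r for all r > r_0, where x_j = p^j(x_0). -/
open scoped ENNReal NNReal BigOperators

universe u

namespace FlowPaper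

/-- A tree rooted at infinity: vertex set `V`, level function `lvl`, predecessor `pred`. -/
structure Tree (V : Type u) where
  lvl : V → ℤ
  pred : V → V
  lvl_pred : ∀ x, lvl (pred x) = lvl x + 1
  sons_fin : ∀ x, {y : V | pred y = x}.Finite
  sons_ne : ∀ x, ∃ y, pred y = x
  conn : ∀ x y, ∃ k l : ℕ, pred^[k] x = pred^[l] y

variable {V : Type u}

namespace Tree

/-- The (finite) set of sons of a vertex. -/
noncomputable def sons (T : Tree V) (x : V) : Finset V := (T.sons_fin x).toFinset

/-- The number of sons `q(x)` of a vertex. -/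
noncomputable def deg (T : Tree V) (x : V) : ℕ := (T.sons x).card

/-- The partial order: `x ≤ y` iff `y` is an iterated predecessor of `x`. -/
def Le (T : Tree V) (x y : V) : Prop := ∃ k : ℕ, T.pred^[k] x = y

/-- The geodesic distance: the least `k + l` with `p^[k] x = p^[l] y`. -/
noncomputable def dist (T : Tree V) (x y : V) : ℕ :=
  sInf {n : ℕ | ∃ k l : ℕ, k + l = n ∧ T.pred^[k] x = T.pred^[l] y}

/-- The closed ball of radius `r` about `x`. -/
def ball (T : Tree V) (x : V) (r : ℕ) : Set V := {y | T.dist x y ≤ r}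

/-- The sphere of radius `r` about `x`. -/
def sphere (T : Tree V) (x : V) (r : ℕ) : Set V := {y | T.dist x y = r}

/-- Adjacency: `x ~ y` iff one is the predecessor of the other. -/
def Adj (T : Tree V) (x y : V) : Prop := T.pred x = y ∨ T.pred y = x

/-- The trapezoid `R_{h1}^{h2}(x0)`. -/
def trap (T : Tree V) (x0 : V) (h1 h2 : ℕ) : Set V :=
  {x | T.Le x x0 ∧ T.lvl x0 - h2 < T.lvl x ∧ T.lvl x ≤ T.lvl x0 - h1}

end Tree

/-- The measure of a subset of vertices. -/
noncomputable def mst (m : V → ℝ≥0∞) (A : Set V) : ℝ≥0∞ := ∑' x : A, m x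

/-- `m` is a flow measure: positive, finite at each vertex, and the value at a
vertex is the sum of the values at its sons. -/
structure IsFlow (T : Tree V) (m : V → ℝ≥0∞) : Prop where
  pos : ∀ x, 0 < m x
  fin : ∀ x, m x < ⊤
  flow : ∀ x, m x = ∑ y ∈ T.sons x, m y

/-- `m` is locally doubling. -/
def LocDoubling (T : Tree V) (m : V → ℝ≥0∞) : Prop :=
  ∀ r : ℕ, 0 < r → ∃ C : ℝ, 1 < C ∧
    ∀ x : V, mst m (T.ball x (2 * r)) ≤ ENNReal.ofReal C * mst m (T.ball x r)

/-- `m` is (globally) doubling. -/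
def Doubling (T : Tree V) (m : V → ℝ≥0∞) : Prop :=
  ∃ C : ℝ, 1 < C ∧ ∀ (r : ℕ) (x : V), 0 < r →
    mst m (T.ball x (2 * r)) ≤ ENNReal.ofReal C * mst m (T.ball x r)

/-- Admissible trapezoid (with respect to the parameter `β`): a singleton, or a
trapezoid `R_{h1}^{h2}(x)` with `2 ≤ h2 / h1 ≤ β`. -/
def IsAdmissible (T : Tree V) (β : ℝ) (R : Set V) : Prop :=
  (∃ x : V, R = {x}) ∨
  ∃ (x : V) (h1 h2 : ℕ), 1 ≤ h1 ∧ 2 * h1 ≤ h2 ∧ (h2 : ℝ) ≤ β * h1 ∧ R = T.trap x h1 h2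

/-- `∫_A |f| dm`. -/
noncomputable def intNN (m : V → ℝ≥0∞) (A : Set V) (f : V → ℂ) : ℝ≥0∞ :=
  ∑' x : A, (‖f x‖₊ : ℝ≥0∞) * m x

/-- `∫_A f dm`. -/
noncomputable def intC (m : V → ℝ≥0∞) (A : Set V) (f : V → ℂ) : ℂ :=
  ∑' x : A, f x * ((m x).toReal : ℂ)

/-- The average `f_A = (1/m(A)) ∫_A f dm`. -/
noncomputable def avg (m : V → ℝ≥0∞) (A : Set V) (f : V → ℂ) : ℂ :=
  intC m A f / (((mst m A).toReal : ℝ) : ℂ)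

/-- `L^p` norm of an `ℝ≥0∞`-valued function, `0 < p < ∞`. -/
noncomputable def lpNormE (m : V → ℝ≥0∞) (p : ℝ) (g : V → ℝ≥0∞) : ℝ≥0∞ :=
  (∑' x : V, g x ^ p * m x) ^ (1 / p)

/-- `L^p` norm, `0 < p < ∞`. -/
noncomputable def lpNorm (m : V → ℝ≥0∞) (p : ℝ) (f : V → ℂ) : ℝ≥0∞ :=
  lpNormE m p (fun x => (‖f x‖₊ : ℝ≥0∞))

/-- `L^∞` norm. -/
noncomputable def linfNorm (f : V → ℂ) : ℝ≥0∞ := ⨆ x : V, (‖f x‖₊ : ℝ≥0∞)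

/-- The Hardy–Littlewood maximal function associated with admissible trapezoids. -/
noncomputable def maximal (T : Tree V) (β : ℝ) (m : V → ℝ≥0∞) (f : V → ℂ) (x : V) : ℝ≥0∞ :=
  ⨆ (R : Set V) (_ : IsAdmissible T β R ∧ x ∈ R), (mst m R)⁻¹ * intNN m R f

/-- The `BMO_q` seminorm. -/
noncomputable def oscNorm (T : Tree V) (β : ℝ) (m : V → ℝ≥0∞) (q : ℝ) (f : V → ℂ) : ℝ≥0∞ :=
  ⨆ (R : Set V) (_ : IsAdmissible T β R),
    ((mst m R)⁻¹ * ∑' x : R, (‖f x - avg m R f‖₊ : ℝ≥0∞) ^ q * m x) ^ (1 / q)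

/-- The sharp maximal function. -/
noncomputable def sharpMaximal (T : Tree V) (β : ℝ) (m : V → ℝ≥0∞) (f : V → ℂ) (x : V) :
    ℝ≥0∞ :=
  ⨆ (R : Set V) (_ : IsAdmissible T β R ∧ x ∈ R),
    (mst m R)⁻¹ * ∑' y : R, (‖f y - avg m R f‖₊ : ℝ≥0∞) * m y

/-- A `(1,p)`-atom, `1 < p < ∞`. -/
def IsAtomP (T : Tree V) (β : ℝ) (m : V → ℝ≥0∞) (p : ℝ) (a : V → ℂ) : Prop :=
  ∃ R : Set V, IsAdmissible T β R ∧ (∀ x ∉ R, a x = 0) ∧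
    lpNorm m p a ≤ (mst m R) ^ (1 / p - 1) ∧ intC m R a = 0

/-- A `(1,∞)`-atom. -/
def IsAtomInf (T : Tree V) (β : ℝ) (m : V → ℝ≥0∞) (a : V → ℂ) : Prop :=
  ∃ R : Set V, IsAdmissible T β R ∧ (∀ x ∉ R, a x = 0) ∧
    linfNorm a ≤ (mst m R)⁻¹ ∧ intC m R a = 0

/-- An atomic decomposition `f = Σ_j λ_j a_j` converging in `L¹(m)`. -/
def IsDecomp (m : V → ℝ≥0∞) (atom : (V → ℂ) → Prop) (f : V → ℂ)
    (lam : ℕ → ℂ) (a : ℕ → V → ℂ) : Prop :=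
  (∀ j, atom (a j)) ∧ Summable (fun j => ‖lam j‖) ∧
  Filter.Tendsto
    (fun N => lpNorm m 1 (fun x => f x - ∑ j ∈ Finset.range N, lam j * a j x))
    Filter.atTop (nhds (0 : ℝ≥0∞))

/-- The atomic Hardy norm associated with the given class of atoms. -/
noncomputable def hNorm (m : V → ℝ≥0∞) (atom : (V → ℂ) → Prop) (f : V → ℂ) : ℝ≥0∞ :=
  ⨅ (d : {la : (ℕ → ℂ) × (ℕ → V → ℂ) // IsDecomp m atom f la.1 la.2}),
    ENNReal.ofReal (∑' j, ‖d.1.1 j‖)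

/-- A (finite) geodesic: pairwise distinct vertices, consecutive ones adjacent. -/
def IsGeodesic (T : Tree V) (l : List V) : Prop := l.Nodup ∧ l.Chain' T.Adj

/-- The number of vertices with at least two sons along a geodesic. -/
noncomputable def branchCount (T : Tree V) (l : List V) : ℕ :=
  List.countP (fun y => decide (2 ≤ T.deg y)) l

/-- The lower half-ball `B_r^-(x0)`. -/
def lowerBall (T : Tree V) (x0 : V) (r : ℕ) : Set V := {x | T.Le x x0 ∧ T.dist x x0 ≤ r}

/-- The boundary `∂A` of a set of vertices. -/
def bdry (T : Tree V) (A : Set V) : Set V := {x ∈ A | ∃ y ∉ A, T.Adj y x}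

/-- Trapezoids as labelled data: a singleton, or the data `(x, h1, h2)`. -/
inductive TrapZ (V : Type u) where
  | single (x : V)
  | tz (x : V) (h1 h2 : ℕ)

namespace TrapZ

/-- The vertex set of a labelled trapezoid. -/
def toSet (T : Tree V) : TrapZ V → Set V
  | single x => {x}
  | tz x h1 h2 => T.trap x h1 h2

/-- Admissibility of a labelled trapezoid. -/
def Adm (β : ℝ) : TrapZ V → Prop
  | single _ => True
  | tz _ h1 h2 => 1 ≤ h1 ∧ 2 * h1 ≤ h2 ∧ (h2 : ℝ) ≤ β * h1

/-- The root of a labelled trapezoid. -/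
def root : TrapZ V → V
  | single x => x
  | tz x _ _ => x

end TrapZ

/-- One step of the decomposition algorithm: the family `ℱ(R,1)`. -/
def children (T : Tree V) : TrapZ V → Set (TrapZ V)
  | .single x => {.single x}
  | .tz x h1 h2 =>
    if h1 = 1 ∧ h2 = 2 then {Q | ∃ y ∈ T.sons x, Q = .single y}
    else if (h1 = 1 ∧ h2 = 3) ∨ 4 * h1 ≤ h2 then {.tz x h1 (2 * h1), .tz x (2 * h1) h2}
    else {Q | ∃ y ∈ T.sons x, Q = .tz y (h1 - 1) (h2 - 1)}

/-- `R'` is an output of the expansion algorithm applied to `R`. -/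
def IsExpansion (T : Tree V) : TrapZ V → TrapZ V → Prop
  | .single x, R' => R' = .tz (T.pred x) 1 2
  | .tz x h1 h2, R' =>
    if h1 = 1 ∧ h2 = 2 then R' = .tz (T.pred x) 1 3
    else if 3 * h1 ≤ h2 then R' = .tz (T.pred x) (h1 + 1) (h2 + 1)
    else R' = .tz x h1 (2 * h2) ∨ R' = .tz x (h1 / 2) h2

/-- The dyadic maximal function associated with a family `D` of partitions. -/
noncomputable def dyadicMaximal (m : V → ℝ≥0∞) (D : ℤ → Set (Set V)) (f : V → ℂ) (x : V) :
    ℝ≥0∞ :=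
  ⨆ (R : Set V) (_ : (∃ j, R ∈ D j) ∧ x ∈ R), (mst m R)⁻¹ * intNN m R f

/-- A dyadic family of partitions of `V` into admissible trapezoids. -/
def IsDyadicFamily (T : Tree V) (β : ℝ) (m : V → ℝ≥0∞) (c Ct : ℝ)
    (D : ℤ → Set (Set V)) : Prop :=
  (∀ j, (∀ R ∈ D j, IsAdmissible T β R) ∧ (D j).Pairwise Disjoint ∧ ⋃₀ (D j) = Set.univ) ∧
  (∀ j k : ℤ, j < k → ∀ R ∈ D j, ∀ R' ∈ D k, R ⊆ R' ∨ R ∩ R' = ∅) ∧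
  (∀ j, ∀ R ∈ D j, ∃! R', R' ∈ D (j + 1) ∧ R ⊆ R') ∧
  (∀ j, ∀ R ∈ D j, ∀ R' ∈ D (j + 1), R ⊆ R' → mst m R' ≤ ENNReal.ofReal Ct * mst m R) ∧
  (∀ j, ∀ R ∈ D j, ∃ F : Finset (Set V), ↑F ⊆ D (j - 1) ∧ (F.card : ℝ) ≤ c ∧ R = ⋃₀ ↑F) ∧
  (∀ x : V, ∃ k : ℤ, ∀ j ≤ k, {x} ∈ D j)

end FlowPaper

namespace FlowPaper

section Aux
variable (T : Tree V) (m : V → ℝ≥0∞)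

lemma mem_sons {x y : V} : y ∈ T.sons x ↔ T.pred y = x := by
  simp [Tree.sons, Set.Finite.mem_toFinset]

lemma mst_mono {A B : Set V} (h : A ⊆ B) : mst m A ≤ mst m B := by
  rw [mst, mst, tsum_subtype, tsum_subtype]
  exact ENNReal.tsum_le_tsum fun a =>
    Set.indicator_le_indicator_of_subset h (fun _ => zero_le) a

lemma mst_union_le (A B : Set V) : mst m (A ∪ B) ≤ mst m A + mst m B := by
  rw [mst, mst, mst, tsum_subtype, tsum_subtype, tsum_subtype, ← ENNReal.tsum_add]
  refine ENNReal.tsum_le_tsum fun a => ?_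
  by_cases hA : a ∈ A
  · calc (A ∪ B).indicator m a ≤ m a := Set.indicator_le_self _ _ a
      _ = A.indicator m a := (Set.indicator_of_mem hA m).symm
      _ ≤ _ := le_add_of_le_of_nonneg le_rfl (zero_le)
  · by_cases hB : a ∈ B
    · calc (A ∪ B).indicator m a ≤ m a := Set.indicator_le_self _ _ a
        _ = B.indicator m a := (Set.indicator_of_mem hB m).symm
        _ ≤ _ := le_add_of_nonneg_of_le (zero_le) le_rfl
    · simp [Set.indicator_of_notMem, hA, hB]

lemma mst_biUnion_le {ι : Type*} (s : Finset ι) (f : ι → Set V) :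
    mst m (⋃ i ∈ s, f i) ≤ ∑ i ∈ s, mst m (f i) := by
  classical
  induction s using Finset.induction with
  | empty => simp [mst]
  | @insert a s' h ih =>
      rw [Finset.set_biUnion_insert, Finset.sum_insert h]
      exact (mst_union_le m _ _).trans (add_le_add_right ih _)

lemma mst_singleton (v : V) : mst m ({v} : Set V) = m v := by
  rw [mst]; exact tsum_singleton v m

/-- Measure of descendants at fixed depth. -/
lemma mst_desc (hm : IsFlow T m) (l : ℕ) (v : V) :
    mst m {w | T.pred^[l] w = v} = m v := by
  classical
  induction l generalizing v with
  | zero =>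
      have : {w | T.pred^[0] w = v} = ({v} : Set V) := by
        ext w; simp
      rw [this, mst_singleton]
  | succ l ih =>
      have key : ∀ w : V, ({w | T.pred^[l+1] w = v} : Set V).indicator m w
          = ∑ y ∈ T.sons v, ({w | T.pred^[l] w = y} : Set V).indicator m w := by
        intro w
        simp only [Set.indicator_apply, Set.mem_setOf_eq]
        by_cases h : T.pred^[l+1] w = v
        · have hy : T.pred^[l] w ∈ T.sons v := by
            rw [mem_sons]; rw [Function.iterate_succ_apply'] at h; exact h
          rw [if_pos h, Finset.sum_eq_single (T.pred^[l] w)]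
          · rw [if_pos rfl]
          · intro y hy' hne
            exact if_neg (fun hmem : T.pred^[l] w = y => hne hmem.symm)
          · intro hn; exact absurd hy hn
        · rw [if_neg h]
          symm
          refine Finset.sum_eq_zero fun y hy => ?_
          refine if_neg (fun hmem => h ?_)
          rw [Function.iterate_succ_apply', hmem]
          exact (mem_sons T).mp hy
      rw [mst, tsum_subtype]
      calc ∑' w, ({w | T.pred^[l+1] w = v} : Set V).indicator m w
          = ∑' w, ∑ y ∈ T.sons v, ({w | T.pred^[l] w = y} : Set V).indicator m w := by
            exact tsum_congr key
        _ = ∑ y ∈ T.sons v, ∑' w, ({w | T.pred^[l] w = y} : Set V).indicator m w :=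
            Summable.tsum_finsetSum (fun i _ => ENNReal.summable)
        _ = ∑ y ∈ T.sons v, m y := by
            refine Finset.sum_congr rfl fun y _ => ?_
            rw [← tsum_subtype, ← mst, ih y]
        _ = m v := (hm.flow v).symm

lemma dist_le {x y : V} {k l : ℕ} (h : T.pred^[k] x = T.pred^[l] y) :
    T.dist x y ≤ k + l :=
  Nat.sInf_le ⟨k, l, rfl, h⟩

lemma exists_dist (x y : V) :
    ∃ k l : ℕ, k + l = T.dist x y ∧ T.pred^[k] x = T.pred^[l] y := by
  have hne : {n : ℕ | ∃ k l : ℕ, k + l = n ∧ T.pred^[k] x = T.pred^[l] y}.Nonempty := by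
    obtain ⟨k, l, h⟩ := T.conn x y
    exact ⟨k + l, k, l, rfl, h⟩
  exact Nat.sInf_mem hne

lemma desc_subset_ball (x : V) {k l r : ℕ} (hk : k + l ≤ r) :
    {w | T.pred^[l] w = T.pred^[k] x} ⊆ T.ball x r := by
  intro w hw
  exact le_trans (dist_le T hw.symm) hk

lemma ball_subset (x : V) (r : ℕ) :
    T.ball x r ⊆ ⋃ k ∈ Finset.range (r+1), ⋃ l ∈ Finset.range (r+1),
      {w | T.pred^[l] w = T.pred^[k] x} := by
  intro y hy
  obtain ⟨k, l, hkl, h⟩ := exists_dist T x y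
  have hr : k + l ≤ r := hkl ▸ hy
  simp only [Set.mem_iUnion, Finset.mem_range]
  exact ⟨k, by omega, l, by omega, h.symm⟩

lemma m_le_m_pred (hm : IsFlow T m) (x : V) : m x ≤ m (T.pred x) := by
  rw [hm.flow (T.pred x)]
  exact Finset.single_le_sum (fun i _ => zero_le) ((mem_sons T).mpr rfl)

lemma m_iterate_mono (hm : IsFlow T m) (x : V) {k r : ℕ} (h : k ≤ r) :
    m (T.pred^[k] x) ≤ m (T.pred^[r] x) := by
  induction r with
  | zero => simp_all
  | succ r ih =>
      rcases Nat.lt_or_ge k (r+1) with h' | h'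
      · rw [Function.iterate_succ_apply']
        exact (ih (by omega)).trans (m_le_m_pred T m hm _)
      · have : k = r + 1 := by omega
        simp [this]

lemma mst_ball_le (hm : IsFlow T m) (x : V) (r : ℕ) :
    mst m (T.ball x r) ≤ ((r:ℝ≥0∞)+1)^2 * m (T.pred^[r] x) := by
  calc mst m (T.ball x r)
      ≤ mst m (⋃ k ∈ Finset.range (r+1), ⋃ l ∈ Finset.range (r+1),
          {w | T.pred^[l] w = T.pred^[k] x}) := mst_mono m (ball_subset T x r)
    _ ≤ ∑ k ∈ Finset.range (r+1), mst m (⋃ l ∈ Finset.range (r+1),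
          {w | T.pred^[l] w = T.pred^[k] x}) := mst_biUnion_le m _ _
    _ ≤ ∑ k ∈ Finset.range (r+1), ∑ l ∈ Finset.range (r+1),
          mst m {w | T.pred^[l] w = T.pred^[k] x} :=
        Finset.sum_le_sum fun k _ => mst_biUnion_le m _ _
    _ ≤ ∑ k ∈ Finset.range (r+1), ∑ l ∈ Finset.range (r+1), m (T.pred^[r] x) := by
        refine Finset.sum_le_sum fun k hk => Finset.sum_le_sum fun l _ => ?_
        rw [mst_desc T m hm]
        exact m_iterate_mono T m hm x (by simpa using Nat.lt_succ_iff.mp (Finset.mem_range.mp hk))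
    _ = ((r:ℝ≥0∞)+1)^2 * m (T.pred^[r] x) := by
        simp only [Finset.sum_const, Finset.card_range, nsmul_eq_mul]
        push_cast
        ring

lemma m_le_mst_ball (hm : IsFlow T m) (x : V) {r k : ℕ} (h : 2*k ≤ r) :
    m (T.pred^[k] x) ≤ mst m (T.ball x r) := by
  rw [← mst_desc T m hm k (T.pred^[k] x)]
  exact mst_mono m (desc_subset_ball T x (by omega))

lemma key_const (hm : IsFlow T m) (hld : LocDoubling T m) :
    ∃ K : ℝ, 1 < K ∧ ∀ y : V, m (T.pred y) ≤ ENNReal.ofReal K * m y := by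
  obtain ⟨C1, hC1, h1⟩ := hld 1 one_pos
  obtain ⟨C2, hC2, h2⟩ := hld 2 two_pos
  refine ⟨3*C1*C2, by nlinarith, fun y => ?_⟩
  obtain ⟨z, hz⟩ := T.sons_ne y
  have hzy : m z ≤ m y := hz ▸ m_le_m_pred T m hm z
  have hball1 : mst m (T.ball z 1) ≤ 3 * m y := by
    have hsub : T.ball z 1 ⊆ ({z} : Set V) ∪ (({y} : Set V) ∪ {w | T.pred^[1] w = z}) := by
      intro w hw
      obtain ⟨k, l, hkl, h⟩ := exists_dist T z w
      have hkl1 : k + l ≤ 1 := hkl ▸ hw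
      have hcases : (k = 0 ∧ l = 0) ∨ (k = 1 ∧ l = 0) ∨ (k = 0 ∧ l = 1) := by omega
      rcases hcases with ⟨hk, hl⟩ | ⟨hk, hl⟩ | ⟨hk, hl⟩ <;> subst hk <;> subst hl <;>
        simp only [Function.iterate_zero, Function.iterate_one, id_eq] at h
      · exact Or.inl h.symm
      · exact Or.inr (Or.inl (by simp [← hz, ← h]))
      · exact Or.inr (Or.inr (by simpa [Set.mem_setOf_eq] using h.symm))
    calc mst m (T.ball z 1) ≤ mst m ({z} : Set V) + (mst m ({y} : Set V)
          + mst m {w | T.pred^[1] w = z}) :=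
          (mst_mono m hsub).trans ((mst_union_le m _ _).trans
            (add_le_add_right (mst_union_le m _ _) _))
      _ = m z + (m y + m z) := by
          rw [mst_singleton, mst_singleton, mst_desc T m hm]
      _ ≤ m y + (m y + m y) := by gcongr
      _ = 3 * m y := by ring
  have hup : m (T.pred y) ≤ mst m (T.ball z 4) := by
    rw [← mst_desc T m hm 2 (T.pred y)]
    refine mst_mono m fun w hw => ?_
    have hzz : T.pred^[2] z = T.pred y := by
      rw [show (2:ℕ) = 1 + 1 from rfl, Function.iterate_succ_apply',
        Function.iterate_one, hz]
    have : T.pred^[2] z = T.pred^[2] w := by rw [hzz, hw]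
    exact le_trans (dist_le T this) (by norm_num)
  calc m (T.pred y) ≤ mst m (T.ball z 4) := hup
    _ = mst m (T.ball z (2*2)) := by norm_num
    _ ≤ ENNReal.ofReal C2 * mst m (T.ball z 2) := h2 z
    _ = ENNReal.ofReal C2 * mst m (T.ball z (2*1)) := by norm_num
    _ ≤ ENNReal.ofReal C2 * (ENNReal.ofReal C1 * mst m (T.ball z 1)) := by
        gcongr; exact h1 z
    _ ≤ ENNReal.ofReal C2 * (ENNReal.ofReal C1 * (3 * m y)) := by gcongr
    _ = ENNReal.ofReal (3*C1*C2) * m y := by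
        rw [show (3:ℝ≥0∞) = ENNReal.ofReal (3:ℝ) by norm_num,
          ENNReal.ofReal_mul (by positivity : (0:ℝ) ≤ 3*C1),
          ENNReal.ofReal_mul (by positivity : (0:ℝ) ≤ 3)]
        ring

lemma toReal_pos' (hm : IsFlow T m) (v : V) : 0 < (m v).toReal :=
  ENNReal.toReal_pos (hm.pos v).ne' (hm.fin v).ne

lemma step_up (hm : IsFlow T m) {K : ℝ} (hK : 1 < K)
    (hKey : ∀ y, m (T.pred y) ≤ ENNReal.ofReal K * m y) (v : V) :
    (m (T.pred v)).toReal ≤ K * (m v).toReal := by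
  have h := hKey v
  have hfin : ENNReal.ofReal K * m v ≠ ⊤ :=
    ENNReal.mul_ne_top ENNReal.ofReal_ne_top (hm.fin v).ne
  have := (ENNReal.toReal_le_toReal (hm.fin _).ne hfin).mpr h
  rwa [ENNReal.toReal_mul, ENNReal.toReal_ofReal (by linarith)] at this

lemma step_low (hm : IsFlow T m) {K : ℝ} (hK : 1 < K)
    (hKey : ∀ y, m (T.pred y) ≤ ENNReal.ofReal K * m y) {u v : V}
    (hu : T.pred u = v) (hdeg : 2 ≤ T.deg v) :
    K / (K - 1) * (m u).toReal ≤ (m v).toReal := by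
  classical
  have hcard : 1 < (T.sons v).card := by unfold Tree.deg at hdeg; omega
  obtain ⟨y, hy, hne⟩ := Finset.exists_mem_ne hcard u
  have hsum : m u + m y ≤ m v := by
    rw [hm.flow v]
    have hsub : ({u, y} : Finset V) ⊆ T.sons v := by
      intro t ht
      rcases Finset.mem_insert.mp ht with h | h
      · subst h; exact (mem_sons T).mpr hu
      · rwa [Finset.mem_singleton.mp h]
    calc m u + m y = ∑ t ∈ ({u, y} : Finset V), m t := by
          rw [Finset.sum_pair (Ne.symm hne)]
      _ ≤ ∑ t ∈ T.sons v, m t := Finset.sum_le_sum_of_subset hsub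
  have hAc : (m v).toReal ≤ K * (m y).toReal := by
    have := step_up T m hm hK hKey y
    rwa [(mem_sons T).mp hy] at this
  have hac : (m u).toReal + (m y).toReal ≤ (m v).toReal := by
    have := (ENNReal.toReal_le_toReal (by
      exact ENNReal.add_ne_top.mpr ⟨(hm.fin u).ne, (hm.fin y).ne⟩) (hm.fin v).ne).mpr hsum
    rwa [ENNReal.toReal_add (hm.fin u).ne (hm.fin y).ne] at this
  rw [div_mul_eq_mul_div, div_le_iff₀ (by linarith)]
  nlinarith [toReal_pos' T m hm y, toReal_pos' T m hm u]

lemma step_flat (hm : IsFlow T m) {u v : V} (hu : T.pred u = v)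
    (hdeg : T.deg v < 2) : m v = m u := by
  have hpos : 0 < T.deg v := Finset.card_pos.mpr ⟨u, (mem_sons T).mpr hu⟩
  have h1 : T.deg v = 1 := by omega
  obtain ⟨a, ha⟩ := Finset.card_eq_one.mp h1
  have hua : u = a := by
    have := (mem_sons T).mpr hu
    rw [ha, Finset.mem_singleton] at this; exact this
  rw [hm.flow v, ha, Finset.sum_singleton, hua]

lemma growth_bounds (hm : IsFlow T m) {K : ℝ} (hK : 1 < K)
    (hKey : ∀ y, m (T.pred y) ≤ ENNReal.ofReal K * m y) (x0 : V) (r : ℕ) :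
    (K/(K-1)) ^ (((Finset.Icc 1 r).filter
        (fun j => 2 ≤ T.deg (T.pred^[j] x0))).card) * (m x0).toReal
      ≤ (m (T.pred^[r] x0)).toReal ∧
    (m (T.pred^[r] x0)).toReal ≤ K ^ (((Finset.Icc 1 r).filter
        (fun j => 2 ≤ T.deg (T.pred^[j] x0))).card) * (m x0).toReal := by
  classical
  set lam := K/(K-1) with hlam
  have hlam1 : 1 < lam := by
    rw [hlam, lt_div_iff₀ (by linarith)]; linarith
  induction r with
  | zero => simp
  | succ r ih =>
      have hicc : Finset.Icc 1 (r+1) = insert (r+1) (Finset.Icc 1 r) :=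
        (Finset.insert_Icc_right_eq_Icc_add_one (by omega)).symm
      have hiter : T.pred^[r+1] x0 = T.pred (T.pred^[r] x0) :=
        Function.iterate_succ_apply' _ _ _
      by_cases hd : 2 ≤ T.deg (T.pred^[r+1] x0)
      · have hNsucc : ((Finset.Icc 1 (r+1)).filter
            (fun j => 2 ≤ T.deg (T.pred^[j] x0))).card
            = ((Finset.Icc 1 r).filter (fun j => 2 ≤ T.deg (T.pred^[j] x0))).card + 1 := by
          simp only [hicc, Finset.filter_insert, if_pos hd]
          rw [Finset.card_insert_of_notMem (fun hmem => by
            have := Finset.mem_of_mem_filter _ hmem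
            simp at this)]
        constructor
        · calc lam ^ ((Finset.Icc 1 (r+1)).filter
                (fun j => 2 ≤ T.deg (T.pred^[j] x0))).card * (m x0).toReal
              = lam * (lam ^ ((Finset.Icc 1 r).filter
                (fun j => 2 ≤ T.deg (T.pred^[j] x0))).card * (m x0).toReal) := by
                rw [hNsucc]; ring
            _ ≤ lam * (m (T.pred^[r] x0)).toReal := by
                have := ih.1
                nlinarith [toReal_pos' T m hm x0]
            _ ≤ (m (T.pred^[r+1] x0)).toReal := by
                rw [hiter] at hd ⊢
                exact step_low T m hm hK hKey rfl hd
        · calc (m (T.pred^[r+1] x0)).toReal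
              ≤ K * (m (T.pred^[r] x0)).toReal := by
                rw [hiter]; exact step_up T m hm hK hKey _
            _ ≤ K * (K ^ ((Finset.Icc 1 r).filter
                (fun j => 2 ≤ T.deg (T.pred^[j] x0))).card * (m x0).toReal) := by
                have := ih.2; nlinarith
            _ = K ^ ((Finset.Icc 1 (r+1)).filter
                (fun j => 2 ≤ T.deg (T.pred^[j] x0))).card * (m x0).toReal := by
                rw [hNsucc]; ring
      · have hNsucc : ((Finset.Icc 1 (r+1)).filter
            (fun j => 2 ≤ T.deg (T.pred^[j] x0))).card
            = ((Finset.Icc 1 r).filter (fun j => 2 ≤ T.deg (T.pred^[j] x0))).card := by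
          simp only [hicc, Finset.filter_insert, if_neg hd]
        have hflat : (m (T.pred^[r+1] x0)).toReal = (m (T.pred^[r] x0)).toReal := by
          rw [hiter, step_flat T m hm rfl (by rw [← hiter]; omega)]
        rw [hNsucc, hflat]
        exact ih

lemma Nr_le (x0 : V) (r : ℕ) :
    ((Finset.Icc 1 r).filter (fun j => 2 ≤ T.deg (T.pred^[j] x0))).card ≤ r := by
  calc ((Finset.Icc 1 r).filter _).card ≤ (Finset.Icc 1 r).card :=
        Finset.card_filter_le _ _
    _ = r := by rw [Nat.card_Icc]; omega

/-- Backward direction: branching frequency implies exponential growth. -/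
lemma backward (hm : IsFlow T m) (hld : LocDoubling T m) (x0 : V)
    (h : ∃ (r0 : ℕ) (α : ℝ), 0 < α ∧ ∀ r : ℕ, r0 < r →
      α * r ≤ (((Finset.Icc 1 r).filter
        (fun j => 2 ≤ T.deg (T.pred^[j] x0))).card : ℝ)) :
    ∃ (r0 : ℕ) (β0 α : ℝ), 0 < β0 ∧ 0 < α ∧
      ∀ r : ℕ, r0 < r →
        ENNReal.ofReal (β0 * Real.exp (α * r)) ≤ mst m (T.ball x0 r) := by
  obtain ⟨r0, α, hα, hbr⟩ := h
  obtain ⟨K, hK, hKey⟩ := key_const T m hm hld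
  set lam := K / (K - 1) with hlamdef
  have hlam1 : 1 < lam := by
    rw [hlamdef, lt_div_iff₀ (by linarith)]; linarith
  have hloglam : 0 < Real.log lam := Real.log_pos hlam1
  set c := α * Real.log lam / 2 with hcdef
  have hc : 0 < c := by positivity
  set b0 := (m x0).toReal with hb0
  have hb0pos : 0 < b0 := toReal_pos' T m hm x0
  refine ⟨2*r0+2, b0 * Real.exp (-c), c, by positivity, hc, fun r hr => ?_⟩
  set k := r / 2 with hkdef
  have hk0 : r0 < k := by omega
  have h2k : 2 * k ≤ r := by omega
  have hrk : (r : ℝ) ≤ 2 * k + 1 := by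
    have : r ≤ 2 * k + 1 := by omega
    exact_mod_cast this
  have hbk := hbr k hk0
  have hg := (growth_bounds T m hm hK hKey x0 k).1
  set Nk := ((Finset.Icc 1 k).filter (fun j => 2 ≤ T.deg (T.pred^[j] x0))).card with hNk
  have hchain : b0 * Real.exp (-c) * Real.exp (c * r) ≤ (m (T.pred^[k] x0)).toReal := by
    have h1 : b0 * Real.exp (-c) * Real.exp (c * r) = b0 * Real.exp (c * r - c) := by
      rw [mul_assoc, ← Real.exp_add]; ring_nf
    have h2 : c * r - c ≤ α * Real.log lam * k := by
      rw [hcdef]; nlinarith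
    have h3 : b0 * Real.exp (c * r - c) ≤ b0 * Real.exp (Real.log lam * (α * k)) := by
      have := Real.exp_le_exp.mpr (by nlinarith : c * r - c ≤ Real.log lam * (α * k))
      nlinarith [Real.exp_pos (c * r - c)]
    have h4 : Real.exp (Real.log lam * (α * k)) = lam ^ (α * k : ℝ) := by
      rw [Real.rpow_def_of_pos (by linarith)]
    have h5 : lam ^ (α * k : ℝ) ≤ lam ^ ((Nk : ℝ) : ℝ) :=
      Real.rpow_le_rpow_of_exponent_le (le_of_lt hlam1) hbk
    have h6 : lam ^ ((Nk : ℝ) : ℝ) = lam ^ Nk := Real.rpow_natCast lam Nk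
    calc b0 * Real.exp (-c) * Real.exp (c * r) = b0 * Real.exp (c * r - c) := h1
      _ ≤ b0 * Real.exp (Real.log lam * (α * k)) := h3
      _ = b0 * lam ^ (α * k : ℝ) := by rw [h4]
      _ ≤ b0 * lam ^ Nk := by
          rw [← h6]; nlinarith [h5, Real.rpow_pos_of_pos (by linarith : (0:ℝ) < lam) (α * k : ℝ)]
      _ ≤ (m (T.pred^[k] x0)).toReal := by rw [mul_comm]; exact hg
  calc ENNReal.ofReal (b0 * Real.exp (-c) * Real.exp (c * r))
      ≤ m (T.pred^[k] x0) := ENNReal.ofReal_le_of_le_toReal hchain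
    _ ≤ mst m (T.ball x0 r) := m_le_mst_ball T m hm x0 h2k

/-- Forward direction: exponential growth implies branching frequency. -/
lemma forward (hm : IsFlow T m) (hld : LocDoubling T m) (x0 : V)
    (h : ∃ (r0 : ℕ) (β0 α : ℝ), 0 < β0 ∧ 0 < α ∧
      ∀ r : ℕ, r0 < r →
        ENNReal.ofReal (β0 * Real.exp (α * r)) ≤ mst m (T.ball x0 r)) :
    ∃ (r0 : ℕ) (α : ℝ), 0 < α ∧ ∀ r : ℕ, r0 < r →
      α * r ≤ (((Finset.Icc 1 r).filter
        (fun j => 2 ≤ T.deg (T.pred^[j] x0))).card : ℝ) := by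
  obtain ⟨r0, β0, α, hβ0, hα, hgr⟩ := h
  obtain ⟨K, hK, hKey⟩ := key_const T m hm hld
  have hlogK : 0 < Real.log K := Real.log_pos hK
  set b0 := (m x0).toReal with hb0
  have hb0pos : 0 < b0 := toReal_pos' T m hm x0
  set c0 := Real.log b0 - Real.log β0 with hc0
  have hlo := Real.isLittleO_log_id_atTop.def (show (0:ℝ) < α/8 by positivity)
  rw [Filter.eventually_atTop] at hlo
  obtain ⟨M, hM⟩ := hlo
  refine ⟨r0 + ⌈M⌉₊ + ⌈(4*c0+α)/α⌉₊ + 1, α / (2 * Real.log K), by positivity,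
    fun r hr => ?_⟩
  have hr0 : r0 < r := by omega
  have hrM : M ≤ (r : ℝ) := by
    have h1 : (⌈M⌉₊ : ℝ) ≤ (r : ℝ) := by exact_mod_cast Nat.le_of_lt (by omega)
    exact le_trans (Nat.le_ceil M) h1
  have hrc : (4*c0+α)/α ≤ (r : ℝ) := by
    have h1 : (⌈(4*c0+α)/α⌉₊ : ℝ) ≤ (r : ℝ) := by exact_mod_cast Nat.le_of_lt (by omega)
    exact le_trans (Nat.le_ceil _) h1
  set Nr := ((Finset.Icc 1 r).filter (fun j => 2 ≤ T.deg (T.pred^[j] x0))).card with hNr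
  set br := (m (T.pred^[r] x0)).toReal with hbr
  have hbrpos : 0 < br := toReal_pos' T m hm _
  -- upper bound on the ball measure, in real form
  have hup : β0 * Real.exp (α * r) ≤ ((r:ℝ)+1)^2 * br := by
    have h1 : ENNReal.ofReal (β0 * Real.exp (α * r)) ≤
        ((r:ℝ≥0∞)+1)^2 * m (T.pred^[r] x0) :=
      le_trans (hgr r hr0) (mst_ball_le T m hm x0 r)
    have hfin : ((r:ℝ≥0∞)+1)^2 * m (T.pred^[r] x0) ≠ ⊤ := by
      refine ENNReal.mul_ne_top ?_ (hm.fin _).ne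
      exact ENNReal.pow_ne_top (by simp [ENNReal.add_ne_top])
    have h2 := ENNReal.toReal_mono hfin h1
    rw [ENNReal.toReal_ofReal (by positivity)] at h2
    rw [ENNReal.toReal_mul, ENNReal.toReal_pow] at h2
    have hr1' : ((r:ℝ≥0∞)+1).toReal = (r:ℝ)+1 := by
      rw [ENNReal.toReal_add (by simp) (by simp)]; simp
    rw [hr1'] at h2
    simpa using h2
  have hgb := (growth_bounds T m hm hK hKey x0 r).2
  have hfull : β0 * Real.exp (α * r) ≤ ((r:ℝ)+1)^2 * (K ^ Nr * b0) := by
    have := hup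
    nlinarith [sq_nonneg ((r:ℝ)+1), hgb]
  -- take logarithms
  have hlog : Real.log β0 + α * r ≤
      2 * Real.log ((r:ℝ)+1) + (Nr : ℝ) * Real.log K + Real.log b0 := by
    have hL : Real.log (β0 * Real.exp (α * r)) ≤
        Real.log (((r:ℝ)+1)^2 * (K ^ Nr * b0)) :=
      Real.log_le_log (by positivity) hfull
    rw [Real.log_mul (by positivity) (Real.exp_ne_zero _), Real.log_exp,
      Real.log_mul (by positivity) (by positivity),
      Real.log_pow, Real.log_mul (by positivity) (by positivity),
      Real.log_pow] at hL
    push_cast at hL ⊢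
    linarith
  have hlogr : Real.log ((r:ℝ)+1) ≤ α/8 * ((r:ℝ)+1) := by
    have h1 := hM ((r:ℝ)+1) (by linarith)
    rw [Real.norm_eq_abs, Real.norm_eq_abs, id] at h1
    calc Real.log ((r:ℝ)+1) ≤ |Real.log ((r:ℝ)+1)| := le_abs_self _
      _ ≤ α/8 * |(r:ℝ)+1| := h1
      _ = α/8 * ((r:ℝ)+1) := by rw [abs_of_pos (by positivity)]
  have hr1 : (1:ℝ) ≤ r := by
    have : 1 ≤ r := by omega
    exact_mod_cast this
  have hmain : α/2 * r ≤ (Nr : ℝ) * Real.log K := by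
    have hαr : 4*c0 + α ≤ α * r := by
      rw [div_le_iff₀ hα] at hrc; linarith
    nlinarith [hlog, hlogr, hr1]
  rw [div_mul_eq_mul_div, div_le_iff₀ (by positivity)]
  calc α * r = 2 * (α/2 * r) := by ring
    _ ≤ 2 * ((Nr:ℝ) * Real.log K) := by linarith
    _ = (Nr:ℝ) * (2 * Real.log K) := by ring

end Aux

/-- characterization of at least exponential growth for locally
doubling flow measures. -/
theorem statement5 {V : Type u} [Countable V] [Infinite V] (T : Tree V)
    (m : V → ℝ≥0∞) (hm : IsFlow T m) (hld : LocDoubling T m) :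
    (∀ x0 : V, ∃ (r0 : ℕ) (β0 α : ℝ), 0 < β0 ∧ 0 < α ∧
        ∀ r : ℕ, r0 < r →
          ENNReal.ofReal (β0 * Real.exp (α * r)) ≤ mst m (T.ball x0 r)) ↔
      (∀ x0 : V, ∃ (r0 : ℕ) (α : ℝ), 0 < α ∧
        ∀ r : ℕ, r0 < r →
          α * r ≤ (((Finset.Icc 1 r).filter
            (fun j => 2 ≤ T.deg (T.pred^[j] x0))).card : ℝ)) := by
  constructor
  · intro h x0
    exact forward T m hm hld x0 (h x0)
  · intro h x0
    exact backward T m hm hld x0 (h x0)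

end FlowPaper
end

section
/- Let m be a flow measure on a tree rooted at infinity, and for A ⊆ V define ∂A = {x ∈ A : there exists y ∉ A with y ~ x}. Then for every x_0 ∈ V and every integer r ≥ 1, the set B_r^-(x_0) = {x ∈ V : x ≤ x_0 and d(x,x_0) ≤ r} satisfies m(B_r^-(x_0)) = (r+1)·m(x_0) and m(∂B_r^-(x_0)) = 2·m(x_0). Consequently there exists no constant C_iso > 0 such that m(∂A) ≥ C_iso·m(A) for all nonempty finite A ⊆ V, i.e. m does not satisfy the isoperimetric inequality. -/
open scoped ENNReal NNReal BigOperators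

universe u

namespace FlowPaper

section Aux

variable {V : Type u} [DecidableEq V] (T : Tree V) (x0 : V)

/-- Descendants at depth `k`. -/
def Dset (k : ℕ) : Set V := {x | T.pred^[k] x = x0}

lemma lvl_iterate (x : V) (k : ℕ) : T.lvl (T.pred^[k] x) = T.lvl x + k := by
  induction k with
  | zero => simp
  | succ n ih => rw [Function.iterate_succ_apply', T.lvl_pred, ih]; push_cast; ring

lemma Dset_unique {x : V} {k j : ℕ} (hk : x ∈ Dset T x0 k) (hj : x ∈ Dset T x0 j) :
    k = j := by
  have h1 := lvl_iterate T x k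
  have h2 := lvl_iterate T x j
  simp only [Dset, Set.mem_setOf_eq] at hk hj
  rw [hk] at h1; rw [hj] at h2
  omega

lemma Dset_finite (k : ℕ) : (Dset T x0 k).Finite := by
  induction k with
  | zero =>
    have h : Dset T x0 0 = {x0} := by ext x; simp [Dset]
    rw [h]; exact Set.finite_singleton x0
  | succ n ih =>
    have h : Dset T x0 (n + 1) = ⋃ y ∈ Dset T x0 n, {x | T.pred x = y} := by
      ext x
      simp only [Dset, Set.mem_setOf_eq, Set.mem_iUnion, exists_prop]
      constructor
      · intro h
        exact ⟨T.pred x, by rwa [Function.iterate_succ_apply] at h, rfl⟩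
      · rintro ⟨y, hy, hxy⟩
        rw [Function.iterate_succ_apply, hxy]; exact hy
    rw [h]; exact ih.biUnion (fun y _ => T.sons_fin y)

lemma mst_coe_finset (m : V → ℝ≥0∞) (s : Finset V) : mst m ↑s = ∑ x ∈ s, m x :=
  Finset.tsum_subtype' s m

lemma mem_sons_iff {y x : V} : y ∈ T.sons x ↔ T.pred y = x := by
  simp [Tree.sons, Set.Finite.mem_toFinset]

lemma mst_Dset (m : V → ℝ≥0∞) (hm : IsFlow T m) (k : ℕ) :
    mst m (Dset T x0 k) = m x0 := by
  induction k with
  | zero =>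
    have h : Dset T x0 0 = ↑({x0} : Finset V) := by ext x; simp [Dset]
    rw [h, mst_coe_finset, Finset.sum_singleton]
  | succ n ih =>
    have h : Dset T x0 (n + 1) =
        ↑((Dset_finite T x0 n).toFinset.biUnion (fun y => T.sons y)) := by
      ext x
      simp only [Finset.coe_biUnion, Set.mem_iUnion, Finset.mem_coe,
        Finset.mem_biUnion, Set.Finite.coe_toFinset, Set.Finite.mem_toFinset,
        mem_sons_iff, Dset, Set.mem_setOf_eq, exists_prop]
      constructor
      · intro h
        exact ⟨T.pred x, by rwa [Function.iterate_succ_apply] at h, rfl⟩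
      · rintro ⟨y, hy, hxy⟩
        rw [Function.iterate_succ_apply, hxy]; exact hy
    rw [h, mst_coe_finset, Finset.sum_biUnion, ← ih]
    · have h2 : ∀ y ∈ (Dset_finite T x0 n).toFinset, ∑ x ∈ T.sons y, m x = m y :=
        fun y _ => (hm.flow y).symm
      rw [Finset.sum_congr rfl h2]
      rw [← mst_coe_finset, Set.Finite.coe_toFinset]
    · intro a _ b _ hab
      simp only [Function.onFun, Finset.disjoint_left]
      intro x hxa hxb
      rw [mem_sons_iff] at hxa hxb
      exact hab (hxa ▸ hxb)

lemma dist_of_le {x : V} {k : ℕ} (hk : T.pred^[k] x = x0) : T.dist x x0 = k := by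
  have hmem : k ∈ {n : ℕ | ∃ a l : ℕ, a + l = n ∧ T.pred^[a] x = T.pred^[l] x0} :=
    ⟨k, 0, by simp, by simpa using hk⟩
  refine le_antisymm (Nat.sInf_le hmem) (le_csInf ⟨k, hmem⟩ ?_)
  rintro n ⟨a, b, rfl, hab⟩
  have h1 := lvl_iterate T x a
  have h2 := lvl_iterate T x0 b
  rw [hab] at h1
  have h3 := lvl_iterate T x k
  rw [hk] at h3
  omega

lemma mem_lowerBall {x : V} {r : ℕ} :
    x ∈ lowerBall T x0 r ↔ ∃ k ≤ r, T.pred^[k] x = x0 := by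
  constructor
  · rintro ⟨⟨k, hk⟩, hd⟩
    rw [dist_of_le T x0 hk] at hd
    exact ⟨k, hd, hk⟩
  · rintro ⟨k, hkr, hk⟩
    exact ⟨⟨k, hk⟩, by rw [dist_of_le T x0 hk]; exact hkr⟩

lemma lowerBall_eq (r : ℕ) :
    lowerBall T x0 r = ↑((Finset.range (r + 1)).biUnion
      (fun k => (Dset_finite T x0 k).toFinset)) := by
  ext x
  simp only [Finset.coe_biUnion, Set.mem_iUnion, Finset.mem_coe, Finset.mem_range,
    Set.Finite.mem_toFinset, mem_lowerBall, Dset, Set.mem_setOf_eq, exists_prop]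
  constructor
  · rintro ⟨k, hkr, hk⟩; exact ⟨k, by omega, hk⟩
  · rintro ⟨k, hkr, hk⟩; exact ⟨k, by omega, hk⟩

lemma mst_lowerBall (m : V → ℝ≥0∞) (hm : IsFlow T m) (r : ℕ) :
    mst m (lowerBall T x0 r) = (r + 1) * m x0 := by
  rw [lowerBall_eq, mst_coe_finset, Finset.sum_biUnion]
  · have h2 : ∀ k ∈ Finset.range (r + 1),
        ∑ x ∈ (Dset_finite T x0 k).toFinset, m x = m x0 := by
      intro k _
      rw [← mst_coe_finset, Set.Finite.coe_toFinset]
      exact mst_Dset T x0 m hm k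
    rw [Finset.sum_congr rfl h2, Finset.sum_const, Finset.card_range, nsmul_eq_mul]
    push_cast; ring
  · intro a _ b _ hab
    simp only [Function.onFun, Finset.disjoint_left]
    intro x hxa hxb
    rw [Set.Finite.mem_toFinset] at hxa hxb
    exact hab (Dset_unique T x0 hxa hxb)

lemma bdry_lowerBall {r : ℕ} (hr : 1 ≤ r) :
    bdry T (lowerBall T x0 r) = {x0} ∪ Dset T x0 r := by
  ext x
  constructor
  · rintro ⟨hxA, y, hyA, hadj⟩
    obtain ⟨k, hkr, hk⟩ := (mem_lowerBall T x0).mp hxA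
    rcases Nat.eq_zero_or_pos k with h0 | hpos
    · subst h0; exact Or.inl (by simpa using hk)
    rcases eq_or_lt_of_le hkr with hkr' | hkr'
    · exact Or.inr (hkr' ▸ hk)
    exfalso
    rcases hadj with hy | hy
    · -- y is a son of x
      apply hyA
      refine (mem_lowerBall T x0).mpr ⟨k + 1, by omega, ?_⟩
      rw [Function.iterate_succ_apply, hy]; exact hk
    · -- y is the predecessor of x
      apply hyA
      refine (mem_lowerBall T x0).mpr ⟨k - 1, by omega, ?_⟩
      have hk' : T.pred^[(k - 1) + 1] x = x0 := by rwa [Nat.sub_add_cancel hpos]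
      rwa [Function.iterate_succ_apply, hy] at hk'
  · rintro (hx | hx)
    · rw [Set.mem_singleton_iff] at hx
      refine ⟨(mem_lowerBall T x0).mpr ⟨0, Nat.zero_le r, by simpa using hx⟩,
        T.pred x0, ?_, Or.inr (by rw [hx])⟩
      intro hy
      obtain ⟨j, _, hj⟩ := (mem_lowerBall T x0).mp hy
      have h1 := lvl_iterate T x0 (j + 1)
      rw [Function.iterate_succ_apply, hj] at h1
      omega
    · rw [Dset, Set.mem_setOf_eq] at hx
      obtain ⟨y, hy⟩ := T.sons_ne x
      refine ⟨(mem_lowerBall T x0).mpr ⟨r, le_refl r, hx⟩, y, ?_, Or.inl hy⟩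
      intro hyB
      obtain ⟨j, hjr, hj⟩ := (mem_lowerBall T x0).mp hyB
      have hy1 : y ∈ Dset T x0 (r + 1) := by
        rw [Dset, Set.mem_setOf_eq, Function.iterate_succ_apply, hy]; exact hx
      have := Dset_unique T x0 hy1 hj
      omega

lemma mst_bdry_lowerBall (m : V → ℝ≥0∞) (hm : IsFlow T m) {r : ℕ} (hr : 1 ≤ r) :
    mst m (bdry T (lowerBall T x0 r)) = 2 * m x0 := by
  have hx0 : x0 ∉ (Dset_finite T x0 r).toFinset := by
    rw [Set.Finite.mem_toFinset]
    intro h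
    have h0 : x0 ∈ Dset T x0 0 := rfl
    have := Dset_unique T x0 h0 h
    omega
  have h : bdry T (lowerBall T x0 r) = ↑(insert x0 (Dset_finite T x0 r).toFinset) := by
    rw [bdry_lowerBall T x0 hr, Finset.coe_insert, Set.Finite.coe_toFinset,
      Set.insert_eq]
  rw [h, mst_coe_finset, Finset.sum_insert hx0, ← mst_coe_finset,
    Set.Finite.coe_toFinset, mst_Dset T x0 m hm r, two_mul]

end Aux

/-- measure of lower half-balls and their boundaries, and failure of
the isoperimetric inequality for flow measures. -/
theorem statement6 {V : Type u} [Countable V] [Infinite V] (T : Tree V)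
    (m : V → ℝ≥0∞) (hm : IsFlow T m) :
    (∀ (x0 : V) (r : ℕ), 1 ≤ r →
      mst m (lowerBall T x0 r) = (r + 1) * m x0 ∧
      mst m (bdry T (lowerBall T x0 r)) = 2 * m x0) ∧
    ¬ ∃ C : ℝ, 0 < C ∧ ∀ A : Set V, A.Finite → A.Nonempty →
        ENNReal.ofReal C * mst m A ≤ mst m (bdry T A) := by
  classical
  constructor
  · intro x0 r hr
    exact ⟨mst_lowerBall T x0 m hm r, mst_bdry_lowerBall T x0 m hm hr⟩
  · rintro ⟨C, hC, hiso⟩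
    obtain ⟨x0⟩ : Nonempty V := inferInstance
    set r : ℕ := ⌈2 / C⌉₊ + 1 with hrdef
    have hr1 : 1 ≤ r := by omega
    have hfin : (lowerBall T x0 r).Finite := by
      rw [lowerBall_eq]; exact Finset.finite_toSet _
    have hne : (lowerBall T x0 r).Nonempty :=
      ⟨x0, (mem_lowerBall T x0).mpr ⟨0, Nat.zero_le _, rfl⟩⟩
    have hA := hiso (lowerBall T x0 r) hfin hne
    rw [mst_lowerBall T x0 m hm r, mst_bdry_lowerBall T x0 m hm hr1] at hA
    rw [← mul_assoc] at hA
    have key : ENNReal.ofReal C * ((r : ℝ≥0∞) + 1) ≤ 2 :=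
      (ENNReal.mul_le_mul_iff_left (hm.pos x0).ne' (hm.fin x0).ne).mp hA
    have heq : ENNReal.ofReal C * ((r : ℝ≥0∞) + 1) = ENNReal.ofReal (C * ((r : ℝ) + 1)) := by
      rw [ENNReal.ofReal_mul hC.le]
      congr 1
      rw [ENNReal.ofReal_add (by positivity) zero_le_one, ENNReal.ofReal_natCast,
        ENNReal.ofReal_one]
    rw [heq, show (2 : ℝ≥0∞) = ENNReal.ofReal 2 by simp,
      ENNReal.ofReal_le_ofReal_iff (by norm_num)] at key
    have h1 : 2 / C < (r : ℝ) + 1 := by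
      have h2 := Nat.le_ceil (2 / C)
      rw [hrdef]
      push_cast
      linarith
    have hrC : 2 < C * ((r : ℝ) + 1) := by
      calc (2 : ℝ) = C * (2 / C) := by field_simp
        _ < C * ((r : ℝ) + 1) := by exact mul_lt_mul_of_pos_left h1 hC
    linarith

end FlowPaper
end
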